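/- Let p be an odd prime, let n ≥ p + 4 be an integer, let α ∈ {0,1}, and let G = 2^α.S_n with projection π : G → S_n and central element z of order 2. Let g ∈ G be an element such that π(g) has cycle type (p, 2, 2, 1^{n−p−4}). Then every irreducible complex character χ of G with χ(z) ≠ χ(1) satisfies χ(g) = 0. -/

import Mathlib

/-! Double covers `2^α.S_n` of the symmetric groups, via the presentation with
generators `z, t_1, …, t_{n-1}` and relations `z² = 1`, `t_j² = z^α`,
`(t_j t_{j+1})³ = z^α`, `[z, t_j] = 1`, and `t_j t_k = z t_k t_j` for `|j - k| > 1`.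
Here `α = 0` gives `2^+.S_n` and `α = 1` gives `2^-.S_n`. -/

namespace DoubleCover

/-- Generators: `Sum.inl ()` is `z`; `Sum.inr j` is `t_{j+1}` for `j : Fin (n - 1)`. -/
abbrev Gen (n : ℕ) := Unit ⊕ Fin (n - 1)

/-- The word `z` in the free group on the generators. -/
def zw (n : ℕ) : FreeGroup (Gen n) := FreeGroup.of (Sum.inl ())

/-- The word `t_{j+1}` in the free group on the generators. -/
def tw (n : ℕ) (j : Fin (n - 1)) : FreeGroup (Gen n) := FreeGroup.of (Sum.inr j)

/-- The relations of the presentation of `2^α.S_n`. -/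
def rels (n α : ℕ) : Set (FreeGroup (Gen n)) :=
  {r | r = zw n ^ 2
    ∨ (∃ j, r = tw n j ^ 2 * (zw n ^ α)⁻¹)
    ∨ (∃ j k : Fin (n - 1), (j : ℕ) + 1 = (k : ℕ) ∧
        r = (tw n j * tw n k) ^ 3 * (zw n ^ α)⁻¹)
    ∨ (∃ j, r = zw n * tw n j * (zw n)⁻¹ * (tw n j)⁻¹)
    ∨ (∃ j k : Fin (n - 1), 1 < Nat.dist (j : ℕ) (k : ℕ) ∧
        r = tw n j * tw n k * (zw n * tw n k * tw n j)⁻¹)}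

/-- The double cover `2^α.S_n` of the symmetric group `S_n`. -/
abbrev Cover (n α : ℕ) := PresentedGroup (rels n α)

/-- The central element `z` of `2^α.S_n`. -/
def z (n α : ℕ) : Cover n α := PresentedGroup.of (Sum.inl ())

/-- The generator `t_{j+1}` of `2^α.S_n`, lifting the transposition `(j+1, j+2)`. -/
def t (n α : ℕ) (j : Fin (n - 1)) : Cover n α := PresentedGroup.of (Sum.inr j)

end DoubleCover

/-- A subgroup is an elementary abelian 2-subgroup iff every element squares to `1`
(this forces it to be abelian). -/
def IsElemAbelianTwo {G : Type*} [Group G] (E : Subgroup G) : Prop :=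
  ∀ x ∈ E, x ^ 2 = 1

/-! Write `y = t_{p+1}` and `g₀ = t_1 ⋯ t_{p-1} t_{p+1} t_{p+3}`, a lift of a permutation of cycle
type `(p, 2, 2)`. Of the `p + 1` factors of `g₀`, all but `y` itself anticommute with `y`, so
`y g₀ y⁻¹ = z^p g₀ = z g₀` as `p` is odd. Since `ker π = ⟨z⟩` is central, every lift `g` of a
permutation of that cycle type is conjugate to `g₀` or `z g₀`, hence `g` is conjugate to `z g`
as well. By Schur's lemma `z` acts on `V` as a scalar `c` with `c² = 1`, and `c ≠ 1` by
faithfulness, so `χ(g) = χ(z g) = -χ(g)`. -/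

section CentralConj

variable {G : Type*} [Group G] {z : G}

theorem conj_list_prod_of_conj_eq_mul (hz : z ∈ Subgroup.center G) {y : G} {l : List G}
    (h : ∀ a ∈ l, y * a * y⁻¹ = z * a) : y * l.prod * y⁻¹ = z ^ l.length * l.prod := by
  induction l with
  | nil => simp
  | cons a l ih =>
    have hcomm : a * z ^ l.length = z ^ l.length * a :=
      Subgroup.mem_center_iff.mp (Subgroup.pow_mem _ hz _) a
    calc y * (a :: l).prod * y⁻¹ = (y * a * y⁻¹) * (y * l.prod * y⁻¹) := by simp [mul_assoc]
      _ = z * (a * z ^ l.length) * l.prod := by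
        rw [h a List.mem_cons_self, ih fun b hb => h b (List.mem_cons_of_mem a hb)]; group
      _ = z ^ (a :: l).length * (a :: l).prod := by rw [hcomm]; simp [pow_succ', mul_assoc]

theorem IsConj.isConj_central_mul (hz : z ∈ Subgroup.center G) {g g' : G} (h : IsConj g g')
    (hg : IsConj g (z * g)) : IsConj g' (z * g') := by
  obtain ⟨c, rfl⟩ := isConj_iff.mp h
  have hzc : c * z * c⁻¹ = z := by rw [Subgroup.mem_center_iff.mp hz c]; group
  refine h.symm.trans (hg.trans (isConj_iff.mpr ⟨c, ?_⟩))
  calc c * (z * g) * c⁻¹ = (c * z * c⁻¹) * (c * g * c⁻¹) := by group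
    _ = z * (c * g * c⁻¹) := by rw [hzc]

theorem isConj_central_mul_mul_left {k g : G} (hz : z ∈ Subgroup.center G)
    (hk : k ∈ Subgroup.center G) (hg : IsConj g (z * g)) : IsConj (k * g) (z * (k * g)) := by
  obtain ⟨c, hc⟩ := isConj_iff.mp hg
  refine isConj_iff.mpr ⟨c, ?_⟩
  calc c * (k * g) * c⁻¹ = k * (c * g * c⁻¹) := by
        simp only [← mul_assoc, Subgroup.mem_center_iff.mp hk c]
    _ = z * (k * g) := by simp only [hc, ← mul_assoc, Subgroup.mem_center_iff.mp hz k]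

theorem isConj_central_mul_of_map_isConj {H : Type*} [Group H] {π : G →* H}
    (hπ : Function.Surjective π) (hker : π.ker ≤ Subgroup.center G) (hz : z ∈ Subgroup.center G)
    {g₀ g : G} (h₀ : IsConj g₀ (z * g₀)) (h : IsConj (π g₀) (π g)) : IsConj g (z * g) := by
  obtain ⟨c, hc⟩ := isConj_iff.mp h
  obtain ⟨x, rfl⟩ := hπ c
  have hk : g * (x * g₀ * x⁻¹)⁻¹ ∈ π.ker := by
    rw [MonoidHom.mem_ker, map_mul, map_inv, map_mul, map_mul, map_inv, hc, mul_inv_cancel]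
  have := isConj_central_mul_mul_left hz (hker hk)
    ((isConj_iff.mpr ⟨x, rfl⟩).isConj_central_mul hz h₀)
  rwa [inv_mul_cancel_right] at this

end CentralConj

section Perm

open Equiv Equiv.Perm

variable {β : Type*} [DecidableEq β]

theorem List.formPerm_map_range_succ (f : ℕ → β) (m : ℕ) :
    ((List.range (m + 1)).map f).formPerm =
      ((List.range m).map fun i => Equiv.swap (f i) (f (i + 1))).prod := by
  have hsplit (g : ℕ → β) (k : ℕ) :
      (List.range (k + 1)).map g = g 0 :: (List.range k).map (g ∘ Nat.succ) := by
    simp [List.range_succ_eq_map]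
  induction m generalizing f with
  | zero => simp
  | succ m ih =>
    rw [hsplit, hsplit (f ∘ Nat.succ), formPerm_cons_cons, ← hsplit (f ∘ Nat.succ), ih,
      List.range_succ_eq_map]
    simp [Function.comp_def]

theorem Equiv.Perm.cycleType_formPerm_mul_swap_mul_swap [Fintype β] {l : List β} {a b c d : β}
    (hl : (l ++ [a, b, c, d]).Nodup) (hlen : 2 ≤ l.length) :
    (l.formPerm * swap a b * swap c d).cycleType = {l.length, 2, 2} := by
  obtain ⟨hl, habcd, hdisj⟩ := List.nodup_append.mp hl
  simp only [List.nodup_cons, List.mem_cons, List.not_mem_nil, List.nodup_nil] at habcd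
  have hab : a ≠ b := by tauto
  have hcd : c ≠ d := by tauto
  have hl_swap {u v : β} (huv : u ≠ v) (hu : u ∈ [a, b, c, d]) (hv : v ∈ [a, b, c, d]) :
      Disjoint l.formPerm (swap u v) := by
    rw [← List.formPerm_pair, List.formPerm_disjoint_iff hl (by simp [huv]) hlen (by simp)]
    intro x hx hx'
    rcases List.mem_pair.mp hx' with rfl | rfl
    exacts [hdisj x hx x hu rfl, hdisj x hx x hv rfl]
  have hab_cd : Disjoint (swap a b) (swap c d) := by
    rw [← List.formPerm_pair, ← List.formPerm_pair,
      List.formPerm_disjoint_iff (by simp [hab]) (by simp [hcd]) (by simp) (by simp)]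
    intro x hx hx'
    rcases List.mem_pair.mp hx with rfl | rfl <;> rcases List.mem_pair.mp hx' with rfl | rfl <;>
      tauto
  have hl_ab := hl_swap hab (by simp) (by simp)
  rw [((hl_swap hcd (by simp) (by simp)).mul_left hab_cd).cycleType_mul, hl_ab.cycleType_mul,
    (List.isCycle_formPerm hl hlen).cycleType,
    List.support_formPerm_of_nodup l hl fun x h => by simp [h] at hlen,
    List.toFinset_card_of_nodup hl, (isCycle_swap hab).cycleType, (isCycle_swap hcd).cycleType,
    card_support_swap hab, card_support_swap hcd]
  rfl

end Perm

namespace FDRep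

open CategoryTheory

variable {k G : Type*} [Field k] [IsAlgClosed k] [Group G]

theorem exists_ρ_eq_smul_id_of_mem_center (V : FDRep k G) [Simple V] {z : G}
    (hz : z ∈ Subgroup.center G) : ∃ c : k, V.ρ z = c • LinearMap.id := by
  let f : V ⟶ V := ⟨Action.ρ V z, fun g => by
    rw [← End.mul_def, ← End.mul_def, ← map_mul, ← map_mul, Subgroup.mem_center_iff.mp hz]⟩
  obtain ⟨c, hc⟩ := endomorphism_simple_eq_smul_id k f
  exact ⟨c, (congrArg (fun φ : V ⟶ V => φ.hom.hom.hom) hc).symm⟩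

theorem character_mul_of_mem_center_of_sq_eq_one (V : FDRep k G) [Simple V] {z : G}
    (hz : z ∈ Subgroup.center G) (hz2 : z ^ 2 = 1) (hfaith : V.character z ≠ V.character 1)
    (g : G) : V.character (z * g) = -V.character g := by
  obtain ⟨c, hc⟩ := V.exists_ρ_eq_smul_id_of_mem_center hz
  have hcz : V.character z = c * Module.finrank k V := by simp [character, hc]
  have hc1 : c ≠ 1 := by rintro rfl; simp [hcz] at hfaith
  have hdim : (Module.finrank k V : k) ≠ 0 := by intro h; simp [hcz, h] at hfaith
  have hc2 : c ^ 2 = 1 := by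
    simpa [character, hc, smul_pow, hdim] using congrArg V.character hz2
  obtain rfl : c = -1 := (sq_eq_one_iff.mp hc2).resolve_left hc1
  simp [character, hc, ← Module.End.one_eq_id]

theorem character_eq_zero_of_isConj_mul [CharZero k] (V : FDRep k G) [Simple V] {z g : G}
    (hz : z ∈ Subgroup.center G) (hz2 : z ^ 2 = 1) (hfaith : V.character z ≠ V.character 1)
    (hg : IsConj g (z * g)) : V.character g = 0 := by
  obtain ⟨c, hc⟩ := isConj_iff.mp hg
  have := V.char_conj g c
  rw [hc, V.character_mul_of_mem_center_of_sq_eq_one hz hz2 hfaith] at this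
  exact CharZero.eq_neg_self_iff.mp this.symm

end FDRep

namespace DoubleCover

variable {n α : ℕ}

theorem z_sq : z n α ^ 2 = 1 :=
  PresentedGroup.one_of_mem (Or.inl rfl)

theorem z_mem_center : z n α ∈ Subgroup.center (Cover n α) := by
  have hgen : Subgroup.closure (Set.range PresentedGroup.of) ≤
      Subgroup.centralizer {z n α} := by
    rw [Subgroup.closure_le]
    rintro _ ⟨_ | j, rfl⟩
    · exact Subgroup.mem_centralizer_singleton_iff.mpr rfl
    · refine Subgroup.mem_centralizer_singleton_iff.mpr ?_
      have h : z n α * t n α j * (z n α)⁻¹ * (t n α j)⁻¹ = 1 :=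
        PresentedGroup.one_of_mem (Or.inr (Or.inr (Or.inr (Or.inl ⟨j, rfl⟩))))
      rw [mul_inv_eq_one, mul_inv_eq_iff_eq_mul] at h
      exact h.symm
  refine Subgroup.mem_center_iff.mpr fun g => ?_
  have := hgen (by rw [PresentedGroup.closure_range_of]; trivial : g ∈ _)
  exact Subgroup.mem_centralizer_singleton_iff.mp this

theorem t_mul_t_of_one_lt_dist {j k : Fin (n - 1)} (h : 1 < Nat.dist j k) :
    t n α j * t n α k = z n α * t n α k * t n α j :=
  PresentedGroup.mk_eq_mk_of_mul_inv_mem (Or.inr (Or.inr (Or.inr (Or.inr ⟨j, k, h, rfl⟩))))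

/-- The generator `t_{i+1}` indexed by `i : ℕ`, with the junk value `1` for `i ≥ n - 1`. -/
def tNat (n α i : ℕ) : Cover n α := if h : i < n - 1 then t n α ⟨i, h⟩ else 1

theorem tNat_conj_of_one_lt_dist {i j : ℕ} (hi : i < n - 1) (hj : j < n - 1)
    (h : 1 < Nat.dist i j) : tNat n α i * tNat n α j * (tNat n α i)⁻¹ = z n α * tNat n α j := by
  simp only [tNat, dif_pos hi, dif_pos hj]
  rw [t_mul_t_of_one_lt_dist (j := ⟨i, hi⟩) (k := ⟨j, hj⟩) h, mul_inv_cancel_right]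

theorem z_pow_of_odd {p : ℕ} (hp : Odd p) : z n α ^ p = z n α := by
  obtain ⟨k, rfl⟩ := hp
  rw [pow_succ, pow_mul, z_sq, one_pow, one_mul]

/-- A lift of `(1 2 ⋯ p)(p+1 p+2)(p+3 p+4)`, namely `t_1 ⋯ t_{p-1} t_{p+1} t_{p+3}`. -/
def cycleLift (n α p : ℕ) : Cover n α :=
  ((List.range (p - 1)).map (tNat n α)).prod * tNat n α p * tNat n α (p + 2)

theorem tNat_conj_cycleLift {p : ℕ} (hp : Odd p) (hn : p + 4 ≤ n) :
    tNat n α p * cycleLift n α p * (tNat n α p)⁻¹ = z n α * cycleLift n α p := by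
  set y := tNat n α p
  set C := ((List.range (p - 1)).map (tNat n α)).prod
  set q := tNat n α (p + 2)
  have hC : y * C * y⁻¹ = z n α ^ (p - 1) * C := by
    have := conj_list_prod_of_conj_eq_mul z_mem_center (y := y)
      (l := (List.range (p - 1)).map (tNat n α)) (by
        simp only [List.mem_map, List.mem_range]
        rintro _ ⟨i, hi, rfl⟩
        exact tNat_conj_of_one_lt_dist (by omega) (by omega) (by unfold Nat.dist; omega))
    simpa using this
  have hq : y * q * y⁻¹ = z n α * q :=
    tNat_conj_of_one_lt_dist (by omega) (by omega) (by unfold Nat.dist; omega)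
  calc y * (C * y * q) * y⁻¹ = (y * C * y⁻¹) * y * (y * q * y⁻¹) := by group
    _ = z n α ^ (p - 1) * (C * y * z n α) * q := by rw [hC, hq]; simp only [mul_assoc]
    _ = z n α ^ (p - 1) * z n α * (C * y * q) := by
      rw [Subgroup.mem_center_iff.mp z_mem_center (C * y)]; simp only [mul_assoc]
    _ = z n α * (C * y * q) := by rw [← pow_succ, Nat.sub_add_cancel hp.pos, z_pow_of_odd hp]

theorem isConj_z_mul_cycleLift {p : ℕ} (hp : Odd p) (hn : p + 4 ≤ n) :
    IsConj (cycleLift n α p) (z n α * cycleLift n α p) :=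
  isConj_iff.mpr ⟨_, tNat_conj_cycleLift hp hn⟩

section

variable [NeZero n] {π : Cover n α →* Equiv.Perm (Fin n)}

theorem map_tNat
    (hπt : ∀ j : Fin (n - 1), π (t n α j) = Equiv.swap (Fin.ofNat n j) (Fin.ofNat n (j + 1)))
    {i : ℕ} (hi : i < n - 1) :
    π (tNat n α i) = Equiv.swap (Fin.ofNat n i) (Fin.ofNat n (i + 1)) := by
  simp only [tNat, dif_pos hi, hπt]

theorem map_cycleLift
    (hπt : ∀ j : Fin (n - 1), π (t n α j) = Equiv.swap (Fin.ofNat n j) (Fin.ofNat n (j + 1)))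
    {p : ℕ} (hp : 1 ≤ p) (hn : p + 4 ≤ n) :
    π (cycleLift n α p) = ((List.range p).map (Fin.ofNat n)).formPerm *
      Equiv.swap (Fin.ofNat n p) (Fin.ofNat n (p + 1)) *
      Equiv.swap (Fin.ofNat n (p + 2)) (Fin.ofNat n (p + 3)) := by
  obtain ⟨m, rfl⟩ := Nat.exists_eq_add_of_le' hp
  have hlist : (List.range m).map (π ∘ tNat n α) =
      (List.range m).map fun i => Equiv.swap (Fin.ofNat n i) (Fin.ofNat n (i + 1)) :=
    List.map_congr_left fun i hi => map_tNat hπt (by rw [List.mem_range] at hi; omega)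
  rw [cycleLift, map_mul, map_mul, map_list_prod, List.map_map, Nat.add_sub_cancel, hlist,
    map_tNat hπt (by omega), map_tNat hπt (by omega), List.formPerm_map_range_succ]

theorem cycleType_map_cycleLift
    (hπt : ∀ j : Fin (n - 1), π (t n α j) = Equiv.swap (Fin.ofNat n j) (Fin.ofNat n (j + 1)))
    {p : ℕ} (hp : 3 ≤ p) (hn : p + 4 ≤ n) :
    (π (cycleLift n α p)).cycleType = {p, 2, 2} := by
  rw [map_cycleLift hπt (by omega) hn]
  have hsplit : (List.range p).map (Fin.ofNat n) ++ [Fin.ofNat n p, Fin.ofNat n (p + 1),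
      Fin.ofNat n (p + 2), Fin.ofNat n (p + 3)] = (List.range (p + 4)).map (Fin.ofNat n) := by
    simp [List.range_succ]
  have hnodup : ((List.range (p + 4)).map (Fin.ofNat n)).Nodup := by
    refine List.nodup_range.map_on fun i hi j hj hij => ?_
    rw [List.mem_range] at hi hj
    have := congrArg Fin.val hij
    rwa [Fin.val_ofNat, Fin.val_ofNat, Nat.mod_eq_of_lt (by omega),
      Nat.mod_eq_of_lt (by omega)] at this
  have := Equiv.Perm.cycleType_formPerm_mul_swap_mul_swap (hsplit ▸ hnodup) (by simp; omega)
  simpa using this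

end

end DoubleCover

/-- Let `p` be an odd prime, `n ≥ p + 4`, and `G = 2^α.S_n`. If `g ∈ G`
projects to a permutation of cycle type `(p, 2, 2, 1^{n-p-4})`, then every irreducible
complex character `χ` of `G` which is faithful on the centre (`χ(z) ≠ χ(1)`) vanishes
at `g`. -/
theorem faithful_char_vanishes_cover_Sn
    (p : ℕ) (hpodd : Odd p)
    (n : ℕ) (hn : p + 4 ≤ n) (α : ℕ)
    (π : DoubleCover.Cover n α →* Equiv.Perm (Fin n))
    (hπt : ∀ j : Fin (n - 1), π (DoubleCover.t n α j) =
      Equiv.swap (Fin.castLE (by omega) j) (Fin.castLE (by omega) j.succ))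
    (hπsurj : Function.Surjective π)
    (hπker : π.ker = Subgroup.zpowers (DoubleCover.z n α))
    (g : DoubleCover.Cover n α)
    (hg : (π g).cycleType = {p, 2, 2})
    (V : FDRep ℂ (DoubleCover.Cover n α)) (hV : CategoryTheory.Simple V)
    (hfaith : V.character (DoubleCover.z n α) ≠ V.character 1) :
    V.character g = 0 := by
  open DoubleCover in
  have : NeZero n := ⟨by omega⟩
  have hp : 3 ≤ p := by
    have := Equiv.Perm.two_le_of_mem_cycleType (by simp [hg] : p ∈ (π g).cycleType)
    obtain ⟨k, rfl⟩ := hpodd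
    omega
  have hπt' (j : Fin (n - 1)) :
      π (t n α j) = Equiv.swap (Fin.ofNat n j) (Fin.ofNat n (j + 1)) := by
    rw [hπt j]
    congr 1 <;> ext <;> simp only [Fin.val_castLE, Fin.val_succ, Fin.val_ofNat] <;>
      rw [Nat.mod_eq_of_lt (by omega)]
  have hconj : IsConj (π (cycleLift n α p)) (π g) := by
    rw [Equiv.Perm.isConj_iff_cycleType_eq, cycleType_map_cycleLift hπt' hp hn, hg]
  have hker : π.ker ≤ Subgroup.center _ := hπker ▸ Subgroup.zpowers_le.mpr z_mem_center
  exact V.character_eq_zero_of_isConj_mul z_mem_center z_sq hfaith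
    (isConj_central_mul_of_map_isConj hπsurj hker z_mem_center
      (isConj_z_mul_cycleLift hpodd hn) hconj)
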